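/- arXiv:1305.2890 — 2 statements merged into one kernel-verified Lean document; each statement's English description precedes it below -/
import Mathlib

section
/- Let (Aⱼ)ⱼ∈ℕ be a partition and, for each j ∈ ℕ, let Sʲ = conv(X₁ʲ, …, X_Nʲ) be a conditional simplex of dimension N in (L⁰)^d. Then the set Σⱼ 1_{Aⱼ} Sʲ := {Σⱼ 1_{Aⱼ} Zⱼ : Zⱼ ∈ Sʲ for all j} equals conv(Y₁, …, Y_N), where Y_k = Σⱼ 1_{Aⱼ} X_kʲ for k = 1, …, N, and Y₁, …, Y_N are affinely independent; in particular, Σⱼ 1_{Aⱼ} Sʲ is a conditional simplex of dimension N. -/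
open MeasureTheory Filter

noncomputable section

variable {Ω : Type*} [MeasurableSpace Ω]

/-- `L⁰(Ω,𝒜,P)`: equivalence classes of real-valued measurable functions modulo
`P`-almost-sure equality. -/
abbrev L0 (P : Measure Ω) : Type _ := Ω →ₘ[P] ℝ

namespace L0

variable (P : Measure Ω)

/-- The indicator `1_A` of a measurable set as an element of `L⁰`. -/
def ind (A : Set Ω) : L0 P :=
  letI := Classical.dec (MeasurableSet A)
  if h : MeasurableSet A then
    AEEqFun.mk (A.indicator fun _ => (1 : ℝ)) (aestronglyMeasurable_const.indicator h)
  else 0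

/-- A partition: a countable family of measurable sets, pairwise disjoint up to null
sets, covering `Ω` up to a null set. -/
structure IsPartition (A : ℕ → Set Ω) : Prop where
  meas : ∀ i, MeasurableSet (A i)
  disj : ∀ i j, i ≠ j → P (A i ∩ A j) = 0
  full : P (⋃ i, A i) = 1

/-- `Z = Σᵢ 1_{Aᵢ} Xᵢ` in `L⁰`: `Z` agrees with `Xᵢ` on `Aᵢ`, i.e. `1_{Aᵢ}·Z = 1_{Aᵢ}·Xᵢ`. -/
def IsGluing1 (A : ℕ → Set Ω) (X : ℕ → L0 P) (Z : L0 P) : Prop :=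
  ∀ i, ind P (A i) * Z = ind P (A i) * X i

/-- `Z = Σᵢ 1_{Aᵢ} Xᵢ` in `(L⁰)^d`. -/
def IsGluing {d : ℕ} (A : ℕ → Set Ω) (X : ℕ → Fin d → L0 P) (Z : Fin d → L0 P) : Prop :=
  ∀ k, IsGluing1 P A (fun i => X i k) (Z k)

/-- The σ-stable hull `σ(𝒞)` of a set `𝒞 ⊆ (L⁰)^d`. -/
def sigmaHull {d : ℕ} (C : Set (Fin d → L0 P)) : Set (Fin d → L0 P) :=
  {Z | ∃ (A : ℕ → Set Ω) (X : ℕ → Fin d → L0 P),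
    IsPartition P A ∧ (∀ i, X i ∈ C) ∧ IsGluing P A X Z}

/-- A function `f` defined (at least) on a σ-stable set `C ⊆ (L⁰)^d` is local if
`f(Σᵢ 1_{Aᵢ} Xᵢ) = Σᵢ 1_{Aᵢ} f(Xᵢ)` for every partition `(Aᵢ)` and family `(Xᵢ)` in `C`. -/
def IsLocal {d e : ℕ} (C : Set (Fin d → L0 P)) (f : (Fin d → L0 P) → (Fin e → L0 P)) : Prop :=
  ∀ (A : ℕ → Set Ω) (X : ℕ → Fin d → L0 P) (Z : Fin d → L0 P),
    IsPartition P A → (∀ i, X i ∈ C) → Z ∈ C → IsGluing P A X Z →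
    IsGluing P A (fun i => f (X i)) (f Z)

/-- Locality for functions with values in `L⁰`. -/
def IsLocalScalar {d : ℕ} (C : Set (Fin d → L0 P)) (f : (Fin d → L0 P) → L0 P) : Prop :=
  ∀ (A : ℕ → Set Ω) (X : ℕ → Fin d → L0 P) (Z : Fin d → L0 P),
    IsPartition P A → (∀ i, X i ∈ C) → Z ∈ C → IsGluing P A X Z →
    IsGluing1 P A (fun i => f (X i)) (f Z)

/-- Locality for functions from `L⁰` to `L⁰`. -/
def IsLocal1 (C : Set (L0 P)) (f : L0 P → L0 P) : Prop :=
  ∀ (A : ℕ → Set Ω) (X : ℕ → L0 P) (Z : L0 P),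
    IsPartition P A → (∀ i, X i ∈ C) → Z ∈ C → IsGluing1 P A X Z →
    IsGluing1 P A (fun i => f (X i)) (f Z)

/-- `P`-almost sure convergence of a sequence in `L⁰`. -/
def TendstoAS (X : ℕ → L0 P) (Y : L0 P) : Prop :=
  ∀ᵐ ω ∂P, Tendsto (fun n => X n ω) atTop (nhds (Y ω))

/-- `P`-almost sure convergence of a sequence in `(L⁰)^d`. -/
def TendstoASd {d : ℕ} (X : ℕ → Fin d → L0 P) (Y : Fin d → L0 P) : Prop :=
  ∀ k, TendstoAS P (fun n => X n k) (Y k)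

/-- Sequential continuity (w.r.t. `P`-a.s. convergence) of `f` on `C ⊆ (L⁰)^d`. -/
def SeqContinuous {d e : ℕ} (C : Set (Fin d → L0 P)) (f : (Fin d → L0 P) → (Fin e → L0 P)) :
    Prop :=
  ∀ (X : ℕ → Fin d → L0 P) (Y : Fin d → L0 P), (∀ n, X n ∈ C) → Y ∈ C →
    TendstoASd P X Y → TendstoASd P (fun n => f (X n)) (f Y)

/-- Sequential continuity for functions from `L⁰` to `L⁰`. -/
def SeqContinuous1 (C : Set (L0 P)) (f : L0 P → L0 P) : Prop :=
  ∀ (X : ℕ → L0 P) (Y : L0 P), (∀ n, X n ∈ C) → Y ∈ C →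
    TendstoAS P X Y → TendstoAS P (fun n => f (X n)) (f Y)

/-- The `L⁰`-convex hull `conv(X₁,…,X_N)` of a finite family in `(L⁰)^d`. -/
def conv {d : ℕ} {ι : Type*} [Fintype ι] (X : ι → Fin d → L0 P) : Set (Fin d → L0 P) :=
  {Y | ∃ lam : ι → L0 P, (∀ i, 0 ≤ lam i) ∧ (∑ i, lam i) = 1 ∧ Y = ∑ i, lam i • X i}

/-- The affine hull `aff(X₁,…,X_N)` of a finite family in `(L⁰)^d`. -/
def aff {d : ℕ} {ι : Type*} [Fintype ι] (X : ι → Fin d → L0 P) : Set (Fin d → L0 P) :=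
  {Y | ∃ lam : ι → L0 P, (∑ i, lam i) = 1 ∧ Y = ∑ i, lam i • X i}

/-- Affine independence of `X₁,…,X_N` in `(L⁰)^d`: either `N = 1`, or `N > 1` and
`Σᵢ₌₁^{N−1} λᵢ (Xᵢ − X_N) = 0` implies `λ₁ = ⋯ = λ_{N−1} = 0`. -/
def AffInd {d : ℕ} : {N : ℕ} → (X : Fin N → Fin d → L0 P) → Prop
  | 0, _ => False
  | 1, _ => True
  | (m + 2), X => ∀ lam : Fin (m + 1) → L0 P,
      (∑ i : Fin (m + 1), lam i • (X i.castSucc - X (Fin.last (m + 1)))) = 0 → ∀ i, lam i = 0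

/-- The `L⁰`-scalar product on `(L⁰)^d`. -/
def inner {d : ℕ} (X Y : Fin d → L0 P) : L0 P := ∑ k, X k * Y k

/-- The `L⁰`-norm on `(L⁰)^d`. -/
def norm {d : ℕ} (X : Fin d → L0 P) : L0 P :=
  AEEqFun.comp Real.sqrt Real.continuous_sqrt (inner P X X)

/-- `D` is the essential supremum (least upper bound in the `P`-a.s. order) of a set
`F ⊆ L⁰`. -/
def IsEssSup (F : Set (L0 P)) (D : L0 P) : Prop :=
  (∀ X ∈ F, X ≤ D) ∧ ∀ D' : L0 P, (∀ X ∈ F, X ≤ D') → D ≤ D'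

/-- `𝒞 ⊆ (L⁰)^d` is bounded if `esssup_{X ∈ 𝒞} ‖X‖` belongs to `L⁰`. -/
def Bounded {d : ℕ} (C : Set (Fin d → L0 P)) : Prop :=
  ∃ b : L0 P, ∀ X ∈ C, norm P X ≤ b

/-- `𝒞 ⊆ (L⁰)^d` is sequentially closed if it contains all `P`-a.s. limits of its
sequences. -/
def SeqClosed {d : ℕ} (C : Set (Fin d → L0 P)) : Prop :=
  ∀ (X : ℕ → Fin d → L0 P) (Y : Fin d → L0 P), (∀ n, X n ∈ C) → TendstoASd P X Y → Y ∈ C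

/-- `L⁰`-convexity of a subset of `(L⁰)^d`. -/
def L0Convex {d : ℕ} (C : Set (Fin d → L0 P)) : Prop :=
  ∀ X ∈ C, ∀ Y ∈ C, ∀ lam : L0 P, 0 ≤ lam → lam ≤ 1 → lam • X + (1 - lam) • Y ∈ C

/-- The vertices `Y_k^π = (1/k) Σᵢ₌₁ᵏ X_{π(i)}` of the member `C_π` of the barycentric
subdivision (0-based: `bary P X π k = (1/(k+1)) Σ_{i ≤ k} X_{π(i)}`). -/
def bary {d N : ℕ} (X : Fin N → Fin d → L0 P) (π : Equiv.Perm (Fin N)) (k : Fin N) :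
    Fin d → L0 P :=
  ((k.1 + 1 : ℝ)⁻¹) • ∑ i ∈ Finset.univ.filter (· ≤ k), X (π i)

end L0

end

/-!
Everything in sight is local. `L⁰` is a commutative ring, and "`Z` agrees with `Xⱼ` on `Aⱼ`"
means `1_{Aⱼ} Z = 1_{Aⱼ} Xⱼ`, a relation compatible with `L⁰`-linear combinations: gluing the
coefficients and gluing the vertices glues the combinations. Random variables can always be
glued along a partition, and a glued variable is determined by its pieces, so a glued family of
points of the `Sʲ` is a convex combination of the `Y_k` with glued coefficients, and conversely.
A relation among the `Y_k`, restricted to `Aⱼ`, is a relation among the `X_kʲ`; hence its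
coefficients vanish on every `Aⱼ`, i.e. everywhere.
-/

namespace MeasureTheory.AEEqFun

variable {α γ : Type*} [MeasurableSpace α] {μ : Measure α} [CommRing γ] [TopologicalSpace γ]
  [IsTopologicalRing γ]

instance instNatCast : NatCast (α →ₘ[μ] γ) := ⟨fun n => const α (n : γ)⟩

instance instIntCast : IntCast (α →ₘ[μ] γ) := ⟨fun n => const α (n : γ)⟩

instance instCommRing : CommRing (α →ₘ[μ] γ) :=
  toGerm_injective.commRing toGerm zero_toGerm one_toGerm add_toGerm mul_toGerm neg_toGerm
    sub_toGerm (fun _ _ => smul_toGerm _ _) (fun _ _ => smul_toGerm _ _) pow_toGerm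
    (fun _ => rfl) (fun _ => rfl)

end MeasureTheory.AEEqFun

theorem smul_sum_smul_congr {R M ι : Type*} [CommSemiring R] [AddCommMonoid M] [Module R M]
    (s : Finset ι) {e : R} {a b : ι → R} {x y : ι → M}
    (hab : ∀ k, e * a k = e * b k) (hxy : ∀ k, e • x k = e • y k) :
    e • ∑ k ∈ s, a k • x k = e • ∑ k ∈ s, b k • y k := by
  simp only [Finset.smul_sum]
  refine Finset.sum_congr rfl fun k _ => ?_
  rw [smul_smul, hab, mul_comm, mul_smul, hxy]
  exact smul_comm _ _ _

namespace L0

variable {Ω : Type*} [MeasurableSpace Ω] {P : Measure Ω}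

theorem coeFn_ind {B : Set Ω} (hB : MeasurableSet B) :
    ⇑(ind P B) =ᵐ[P] B.indicator fun _ => (1 : ℝ) := by
  rw [ind, dif_pos hB]
  exact AEEqFun.coeFn_mk _ _

theorem ind_mul_le_ind_mul_iff {B : Set Ω} (hB : MeasurableSet B) {U V : L0 P} :
    ind P B * U ≤ ind P B * V ↔ ∀ᵐ ω ∂P, ω ∈ B → U ω ≤ V ω := by
  rw [← AEEqFun.coeFn_le]
  refine eventually_congr ?_
  filter_upwards [AEEqFun.coeFn_mul (ind P B) U, AEEqFun.coeFn_mul (ind P B) V, coeFn_ind hB]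
    with ω hU hV hind
  by_cases hω : ω ∈ B <;> simp [hU, hV, hind, hω]

theorem ind_mul_le_ind_mul {B : Set Ω} (hB : MeasurableSet B) {U V : L0 P} (h : U ≤ V) :
    ind P B * U ≤ ind P B * V :=
  (ind_mul_le_ind_mul_iff hB).2 <| by
    filter_upwards [AEEqFun.coeFn_le.2 h] with ω hω _
    exact hω

theorem ind_mul_eq_ind_mul_iff {B : Set Ω} (hB : MeasurableSet B) {U V : L0 P} :
    ind P B * U = ind P B * V ↔ ∀ᵐ ω ∂P, ω ∈ B → U ω = V ω := by
  simp only [le_antisymm_iff, ind_mul_le_ind_mul_iff hB, ← eventually_and, imp_and]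

theorem isGluing_iff_smul {d : ℕ} {A : ℕ → Set Ω} {X : ℕ → Fin d → L0 P} {Z : Fin d → L0 P} :
    IsGluing P A X Z ↔ ∀ i, ind P (A i) • Z = ind P (A i) • X i := by
  simp only [IsGluing, IsGluing1, funext_iff, Pi.smul_apply, smul_eq_mul]
  exact forall_comm

namespace IsPartition

variable {A : ℕ → Set Ω} (hA : IsPartition P A)
include hA

theorem ae_mem_disjointed (i : ℕ) : ∀ᵐ ω ∂P, ω ∈ A i → ω ∈ disjointed A i := by
  have hnull : ∀ j, ∀ᵐ ω ∂P, j ≠ i → ω ∉ A i ∩ A j := fun j => by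
    by_cases hj : j = i
    · exact Eventually.of_forall fun _ h => absurd hj h
    · filter_upwards [measure_eq_zero_iff_ae_notMem.mp (hA.disj i j (Ne.symm hj))] with ω hω _
      exact hω
  filter_upwards [ae_all_iff.2 hnull] with ω hω hi
  rw [disjointed_eq_inter_compl]
  exact ⟨hi, Set.mem_iInter₂.2 fun j hj hj' => hω j hj.ne ⟨hi, hj'⟩⟩

/-- Glue along `disjointed A`, which is a genuine partition and agrees with `A` up to null sets. -/
theorem exists_isGluing1 (X : ℕ → L0 P) : ∃ Z, IsGluing1 P A X Z := by
  obtain ⟨g, hg, hgX⟩ := exists_measurable_piecewise (disjointed A)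
    (MeasurableSet.disjointed hA.meas) (fun i => ⇑(X i)) (fun i => (X i).measurable)
    fun i j hij => by simp [(disjoint_disjointed A hij).inter_eq]
  refine ⟨AEEqFun.mk g hg.aestronglyMeasurable, fun i => (ind_mul_eq_ind_mul_iff (hA.meas i)).2 ?_⟩
  filter_upwards [AEEqFun.coeFn_mk g hg.aestronglyMeasurable, hA.ae_mem_disjointed i]
    with ω hω hdisj hi
  rw [hω]
  exact hgX i (hdisj hi)

variable [IsProbabilityMeasure P]

theorem ae_exists_mem : ∀ᵐ ω ∂P, ∃ i, ω ∈ A i := by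
  simpa only [Set.mem_iUnion] using (ae_mem_iff_measure_eq
    (MeasurableSet.iUnion hA.meas).nullMeasurableSet).2 (by rw [hA.full, measure_univ])

theorem le_of_forall_ind_mul_le {U V : L0 P} (h : ∀ i, ind P (A i) * U ≤ ind P (A i) * V) :
    U ≤ V := by
  rw [← AEEqFun.coeFn_le]
  filter_upwards [ae_all_iff.2 fun i => (ind_mul_le_ind_mul_iff (hA.meas i)).1 (h i),
    hA.ae_exists_mem] with ω hω ⟨i, hi⟩
  exact hω i hi

theorem eq_of_forall_ind_mul_eq {U V : L0 P} (h : ∀ i, ind P (A i) * U = ind P (A i) * V) :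
    U = V :=
  le_antisymm (hA.le_of_forall_ind_mul_le fun i => (h i).le)
    (hA.le_of_forall_ind_mul_le fun i => (h i).ge)

theorem eq_of_forall_ind_smul_eq {d : ℕ} {Z Z' : Fin d → L0 P}
    (h : ∀ i, ind P (A i) • Z = ind P (A i) • Z') : Z = Z' :=
  funext fun c => hA.eq_of_forall_ind_mul_eq fun i => congrFun (h i) c

theorem setOf_isGluing_conv_eq {d : ℕ} {ι : Type*} [Fintype ι] (X : ℕ → ι → Fin d → L0 P)
    {Y : ι → Fin d → L0 P} (hY : ∀ k, IsGluing P A (fun j => X j k) (Y k)) :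
    {Z | ∃ W : ℕ → Fin d → L0 P, (∀ j, W j ∈ conv P (X j)) ∧ IsGluing P A W Z} = conv P Y := by
  have hYX : ∀ j k, ind P (A j) • Y k = ind P (A j) • X j k :=
    fun j k => isGluing_iff_smul.1 (hY k) j
  ext Z
  constructor
  · rintro ⟨W, hW, hWZ⟩
    choose lam hlam0 hlam1 hlamW using hW
    choose mu hmu using fun k => hA.exists_isGluing1 fun j => lam j k
    refine ⟨mu, fun k => hA.le_of_forall_ind_mul_le fun j => ?_,
      hA.eq_of_forall_ind_mul_eq fun j => ?_, hA.eq_of_forall_ind_smul_eq fun j => ?_⟩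
    · rw [hmu k j]
      exact ind_mul_le_ind_mul (hA.meas j) (hlam0 j k)
    · rw [Finset.mul_sum, Finset.sum_congr rfl fun k _ => hmu k j, ← Finset.mul_sum, hlam1 j]
    · rw [isGluing_iff_smul.1 hWZ j, hlamW j]
      exact smul_sum_smul_congr _ (fun k => (hmu k j).symm) fun k => (hYX j k).symm
  · rintro ⟨lam, hlam0, hlam1, rfl⟩
    exact ⟨fun j => ∑ k, lam k • X j k, fun j => ⟨lam, hlam0, hlam1, rfl⟩,
      isGluing_iff_smul.2 fun j => smul_sum_smul_congr _ (fun _ => rfl) (hYX j)⟩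

theorem affInd_of_isGluing {d N : ℕ} {X : ℕ → Fin N → Fin d → L0 P} {Y : Fin N → Fin d → L0 P}
    (hX : ∀ j, AffInd P (X j)) (hY : ∀ k, IsGluing P A (fun j => X j k) (Y k)) :
    AffInd P Y := by
  match N, X, Y, hX, hY with
  | 0, _, _, hX, _ => exact (hX 0).elim
  | 1, _, _, _, _ => trivial
  | m + 2, X, Y, hX, hY =>
    intro lam hlam i
    have hYX : ∀ j k, ind P (A j) • Y k = ind P (A j) • X j k :=
      fun j k => isGluing_iff_smul.1 (hY k) j
    refine hA.eq_of_forall_ind_mul_eq fun j => ?_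
    rw [mul_zero]
    refine hX j (fun i => ind P (A j) * lam i) ?_ i
    calc ∑ i : Fin (m + 1), (ind P (A j) * lam i) • (X j i.castSucc - X j (Fin.last _))
        = ind P (A j) • ∑ i : Fin (m + 1), lam i • (X j i.castSucc - X j (Fin.last _)) := by
          simp only [Finset.smul_sum, mul_smul]
      _ = ind P (A j) • ∑ i : Fin (m + 1), lam i • (Y i.castSucc - Y (Fin.last _)) :=
          smul_sum_smul_congr _ (fun _ => rfl) fun k => by rw [smul_sub, smul_sub, hYX, hYX]
      _ = 0 := by rw [hlam, smul_zero]

end IsPartition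

end L0

open MeasureTheory in
/-- a σ-combination `Σⱼ 1_{Aⱼ} Sʲ` of conditional simplexes of dimension `N`
along a partition is a conditional simplex of dimension `N`. -/
theorem stmt_6 {Ω : Type*} [MeasurableSpace Ω] (P : Measure Ω) [IsProbabilityMeasure P]
    {d N : ℕ} (A : ℕ → Set Ω) (hA : L0.IsPartition P A)
    (X : ℕ → Fin N → Fin d → L0 P) (hX : ∀ j, L0.AffInd P (X j))
    (Y : Fin N → Fin d → L0 P)
    (hY : ∀ k, L0.IsGluing P A (fun j => X j k) (Y k)) :
    {Z | ∃ W : ℕ → Fin d → L0 P, (∀ j, W j ∈ L0.conv P (X j)) ∧ L0.IsGluing P A W Z}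
        = L0.conv P Y
      ∧ L0.AffInd P Y :=
  ⟨hA.setOf_isGluing_conv_eq X hY, hA.affInd_of_isGluing hX hY⟩
end

section
/- Let S = conv(X₁, …, X_N) be a conditional simplex in (L⁰)^d with barycentric subdivision (C_π)_{π ∈ S_N}, and let π, π̄ be permutations of {1, …, N}. Set J = {j ∈ {1, …, N} : {π(1), …, π(j)} = {π̄(1), …, π̄(j)}}. Then C_π ∩ C_π̄ = conv({(1/j) Σ_{k=1}^j X_{π(k)} : j ∈ J}); in particular, C_π ∩ C_π̄ is a conditional simplex, and if π ≠ π̄ its dimension |J| is strictly less than N. -/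
open MeasureTheory Filter

/-!
With `b(λ)_k = Σ_{j ≥ k} λ_j / j`, the point `Σ_k λ_k Y_k^π` of `C_π` has barycentric coordinate
`b(λ)_{π⁻¹(i)}` at the vertex `X_i`; `b` is triangular, hence injective. By affine independence of
the `X_i`, a point of `C_π ∩ C_π̄` thus comes with nonnegative `λ, μ` such that
`b(λ) ∘ π⁻¹ = b(μ) ∘ π̄⁻¹`. For `j ∉ J` some vertex is among `π(1), …, π(j)` but not among
`π̄(1), …, π̄(j)`, and another one conversely; since `b` is antitone for nonnegative weights,
comparing the two gives `(λ_j + μ_j) / j ≤ 0`, so `λ_j = 0`. For `j ∈ J` the vertices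
`Y_j^π = Y_j^π̄` agree, which gives the other inclusion. The vertices `Y_j^π` are affinely
independent because `b` is injective, and `J = {1, …, N}` forces `π = π̄`.
-/

open Finset

theorem AffineIndependent.eq_of_sum_smul_eq {R M ι : Type*} [Ring R] [AddCommGroup M] [Module R M]
    [Fintype ι] {p : ι → M} (hp : AffineIndependent R p) {w₁ w₂ : ι → R}
    (h₁ : ∑ i, w₁ i = 1) (h₂ : ∑ i, w₂ i = 1) (h : ∑ i, w₁ i • p i = ∑ i, w₂ i • p i) :
    w₁ = w₂ := by
  refine (affineIndependent_iff_eq_of_fintype_affineCombination_eq R p).mp hp w₁ w₂ h₁ h₂ ?_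
  rwa [univ.affineCombination_eq_linear_combination p w₁ h₁,
    univ.affineCombination_eq_linear_combination p w₂ h₂]

namespace Equiv.Perm

variable {N : ℕ}

theorem mem_image_Iic_iff (π : Equiv.Perm (Fin N)) {i j : Fin N} :
    i ∈ (Iic j).image π ↔ π.symm i ≤ j := by
  simp [← Equiv.eq_symm_apply]

theorem exists_symm_le_lt_of_image_Iic_ne {π σ : Equiv.Perm (Fin N)} {j : Fin N}
    (h : (Iic j).image π ≠ (Iic j).image σ) : ∃ i, π.symm i ≤ j ∧ j < σ.symm i := by
  have hcard : ((Iic j).image σ).card ≤ ((Iic j).image π).card := by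
    rw [card_image_of_injective _ π.injective, card_image_of_injective _ σ.injective]
  obtain ⟨i, hπ, hσ⟩ := not_subset.mp fun hsub => h (eq_of_subset_of_card_le hsub hcard)
  rw [mem_image_Iic_iff] at hπ hσ
  exact ⟨i, hπ, not_le.mp hσ⟩

theorem eq_of_image_Iic_eq {π σ : Equiv.Perm (Fin N)}
    (h : ∀ j, (Iic j).image π = (Iic j).image σ) : π = σ := by
  have hle : ∀ j, ((σ.symm (π j) : Fin N) : ℕ) ≤ j := fun j =>
    σ.mem_image_Iic_iff.mp (h j ▸ mem_image_of_mem π (mem_Iic.mpr le_rfl))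
  have hsum : ∑ j, ((σ.symm (π j) : Fin N) : ℕ) = ∑ j : Fin N, (j : ℕ) :=
    Equiv.sum_comp (π.trans σ.symm) (fun j : Fin N => (j : ℕ))
  refine Equiv.ext fun j => ?_
  have hj := (sum_eq_sum_iff_of_le fun j _ => hle j).mp hsum j (mem_univ j)
  simpa using congrArg σ (Fin.ext hj)

end Equiv.Perm

namespace Barycentric

variable {N : ℕ}

section Coefficients

variable {A : Type*} [AddCommGroup A] [Module ℝ A]

noncomputable def baryCoeff (w : Fin N → A) (k : Fin N) : A :=
  ∑ j ∈ Ici k, (j.1 + 1 : ℝ)⁻¹ • w j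

noncomputable def baryTail (w : Fin N → A) (k : Fin N) : A :=
  ∑ j ∈ Ioi k, (j.1 + 1 : ℝ)⁻¹ • w j

theorem baryCoeff_eq_add (w : Fin N → A) (k : Fin N) :
    baryCoeff w k = (k.1 + 1 : ℝ)⁻¹ • w k + baryTail w k := by
  rw [baryCoeff, baryTail, Ici_eq_cons_Ioi, sum_cons]

theorem sum_baryCoeff (w : Fin N → A) : ∑ k, baryCoeff w k = ∑ k, w k := by
  simp only [baryCoeff]
  rw [sum_comm' (t' := univ) (s' := Iic) (by simp)]
  refine sum_congr rfl fun j _ => ?_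
  rw [sum_const, Fin.card_Iic, ← Nat.cast_smul_eq_nsmul ℝ, smul_smul, Nat.cast_add,
    Nat.cast_one, mul_inv_cancel₀ (by positivity), one_smul]

theorem sum_baryCoeff_symm (w : Fin N → A) (π : Equiv.Perm (Fin N)) :
    ∑ i, baryCoeff w (π.symm i) = ∑ k, w k := by
  rw [Equiv.sum_comp π.symm (baryCoeff w), sum_baryCoeff]

theorem baryCoeff_injective : Function.Injective (baryCoeff : (Fin N → A) → Fin N → A) := by
  intro v w h
  funext k
  induction k using WellFoundedGT.induction with
  | _ k ih =>
    have htail : baryTail v k = baryTail w k :=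
      sum_congr rfl fun j hj => by rw [ih j (mem_Ioi.mp hj)]
    have hk := congrFun h k
    rw [baryCoeff_eq_add, baryCoeff_eq_add, htail, add_left_inj] at hk
    exact smul_right_injective A (by positivity) hk

end Coefficients

section Order

variable {A : Type*} [AddCommGroup A] [PartialOrder A] [IsOrderedAddMonoid A] [Module ℝ A]
  [PosSMulMono ℝ A] {v w : Fin N → A}

theorem baryCoeff_antitone (hw : 0 ≤ w) : Antitone (baryCoeff w) := fun _ _ h =>
  sum_le_sum_of_subset_of_nonneg (Ici_subset_Ici.mpr h) fun j _ _ =>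
    smul_nonneg (by positivity) (hw j)

theorem baryCoeff_le_baryTail (hw : 0 ≤ w) {j k : Fin N} (h : j < k) :
    baryCoeff w k ≤ baryTail w j :=
  sum_le_sum_of_subset_of_nonneg (fun l hl => mem_Ioi.mpr (h.trans_le (mem_Ici.mp hl)))
    fun l _ _ => smul_nonneg (by positivity) (hw l)

theorem eq_zero_of_baryCoeff_symm_eq (hv : 0 ≤ v) (hw : 0 ≤ w) {π σ : Equiv.Perm (Fin N)}
    (h : ∀ i, baryCoeff v (π.symm i) = baryCoeff w (σ.symm i)) {j : Fin N}
    (hj : (Iic j).image π ≠ (Iic j).image σ) : v j = 0 := by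
  obtain ⟨i, hπ, hσ⟩ := Equiv.Perm.exists_symm_le_lt_of_image_Iic_ne hj
  obtain ⟨i', hσ', hπ'⟩ := Equiv.Perm.exists_symm_le_lt_of_image_Iic_ne hj.symm
  have hvw : baryCoeff v j ≤ baryTail w j :=
    (baryCoeff_antitone hv hπ).trans ((h i).trans_le (baryCoeff_le_baryTail hw hσ))
  have hwv : baryCoeff w j ≤ baryTail v j :=
    (baryCoeff_antitone hw hσ').trans ((h i').symm.trans_le (baryCoeff_le_baryTail hv hπ'))
  rw [baryCoeff_eq_add, ← le_sub_iff_add_le] at hvw hwv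
  have hv₀ : 0 ≤ (j.1 + 1 : ℝ)⁻¹ • v j := smul_nonneg (by positivity) (hv j)
  have hw₀ : 0 ≤ (j.1 + 1 : ℝ)⁻¹ • w j := smul_nonneg (by positivity) (hw j)
  have hle : (j.1 + 1 : ℝ)⁻¹ • v j + (j.1 + 1 : ℝ)⁻¹ • w j ≤ 0 :=
    (add_le_add hvw hwv).trans_eq (by abel)
  have h₀ : (j.1 + 1 : ℝ)⁻¹ • v j = 0 := le_antisymm ((le_add_of_nonneg_right hw₀).trans hle) hv₀
  exact (smul_eq_zero.mp h₀).resolve_left (by positivity)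

end Order

section Vertices

variable {R M : Type*} [CommRing R] [Algebra ℝ R] [AddCommGroup M] [Module R M] [Module ℝ M]
  [IsScalarTower ℝ R M]

noncomputable def baryVertex (X : Fin N → M) (π : Equiv.Perm (Fin N)) (k : Fin N) : M :=
  (k.1 + 1 : ℝ)⁻¹ • ∑ i ∈ Iic k, X (π i)

theorem sum_smul_baryVertex (X : Fin N → M) (π : Equiv.Perm (Fin N)) (w : Fin N → R) :
    ∑ k, w k • baryVertex X π k = ∑ i, baryCoeff w (π.symm i) • X i := by
  calc ∑ k, w k • baryVertex X π k
      = ∑ k, ∑ i ∈ Iic k, ((k.1 + 1 : ℝ)⁻¹ • w k) • X (π i) := by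
        simp only [baryVertex, smul_comm (w _), smul_assoc, smul_sum]
    _ = ∑ i, ∑ k ∈ Ici i, ((k.1 + 1 : ℝ)⁻¹ • w k) • X (π i) :=
        sum_comm' (by simp)
    _ = ∑ i, baryCoeff w i • X (π i) := by simp only [baryCoeff, sum_smul]
    _ = ∑ i, baryCoeff w (π.symm i) • X i :=
        (Equiv.sum_comp π.symm fun i => baryCoeff w i • X (π i)).symm.trans (by simp)

theorem baryVertex_eq_of_image_Iic_eq (X : Fin N → M) {π σ : Equiv.Perm (Fin N)} {j : Fin N}
    (h : (Iic j).image π = (Iic j).image σ) : baryVertex X π j = baryVertex X σ j := by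
  rw [baryVertex, baryVertex, ← sum_image (fun a _ b _ hab => π.injective hab), h,
    sum_image fun a _ b _ hab => σ.injective hab]

theorem baryCoeff_symm_eq_of_sum_smul_baryVertex_eq {X : Fin N → M} (hX : AffineIndependent R X)
    {π σ : Equiv.Perm (Fin N)} {v w : Fin N → R} (hv : ∑ k, v k = 1) (hw : ∑ k, w k = 1)
    (h : ∑ k, v k • baryVertex X π k = ∑ k, w k • baryVertex X σ k) (i : Fin N) :
    baryCoeff v (π.symm i) = baryCoeff w (σ.symm i) := by
  rw [sum_smul_baryVertex, sum_smul_baryVertex] at h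
  have := hX.eq_of_sum_smul_eq ((sum_baryCoeff_symm v π).trans hv)
    ((sum_baryCoeff_symm w σ).trans hw) h
  exact congrFun this i

theorem _root_.AffineIndependent.baryVertex {X : Fin N → M} (hX : AffineIndependent R X)
    (π : Equiv.Perm (Fin N)) : AffineIndependent R (baryVertex X π) := by
  rw [affineIndependent_iff_eq_of_fintype_affineCombination_eq]
  intro v w hv hw h
  rw [univ.affineCombination_eq_linear_combination _ v hv,
    univ.affineCombination_eq_linear_combination _ w hw] at h
  refine baryCoeff_injective (funext fun k => ?_)
  simpa using baryCoeff_symm_eq_of_sum_smul_baryVertex_eq hX hv hw h (π k)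

end Vertices

end Barycentric

namespace L0

open MeasureTheory Barycentric

variable {Ω : Type*} [MeasurableSpace Ω] (P : Measure Ω) {d N : ℕ}

instance : NatCast (L0 P) := ⟨fun n => AEEqFun.const Ω (n : ℝ)⟩

instance : IntCast (L0 P) := ⟨fun n => AEEqFun.const Ω (n : ℝ)⟩

instance : CommRing (L0 P) :=
  AEEqFun.toGerm_injective.commRing _ AEEqFun.zero_toGerm AEEqFun.one_toGerm AEEqFun.add_toGerm
    AEEqFun.mul_toGerm AEEqFun.neg_toGerm AEEqFun.sub_toGerm (fun _ _ => AEEqFun.smul_toGerm _ _)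
    (fun _ _ => AEEqFun.smul_toGerm _ _) AEEqFun.pow_toGerm (fun _ => rfl) (fun _ => rfl)

instance : Algebra ℝ (L0 P) :=
  Algebra.ofModule
    (fun r a b => AEEqFun.ext <| by
      filter_upwards [AEEqFun.coeFn_mul (r • a) b, AEEqFun.coeFn_smul r a, AEEqFun.coeFn_mul a b,
        AEEqFun.coeFn_smul r (a * b)] with ω h₁ h₂ h₃ h₄
      simp [h₁, h₂, h₃, h₄, mul_assoc])
    (fun r a b => AEEqFun.ext <| by
      filter_upwards [AEEqFun.coeFn_mul a (r • b), AEEqFun.coeFn_smul r b, AEEqFun.coeFn_mul a b,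
        AEEqFun.coeFn_smul r (a * b)] with ω h₁ h₂ h₃ h₄
      simp [h₁, h₂, h₃, h₄, mul_left_comm])

instance : IsOrderedAddMonoid (L0 P) where
  add_le_add_left a b h c := by
    rw [← AEEqFun.coeFn_le] at h ⊢
    filter_upwards [h, AEEqFun.coeFn_add a c, AEEqFun.coeFn_add b c] with ω h ha hb
    simpa [ha, hb] using h

instance : PosSMulMono ℝ (L0 P) where
  smul_le_smul_of_nonneg_left r hr a b h := by
    rw [← AEEqFun.coeFn_le] at h ⊢
    filter_upwards [h, AEEqFun.coeFn_smul r a, AEEqFun.coeFn_smul r b] with ω h ha hb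
    simpa [ha, hb] using smul_le_smul_of_nonneg_left h hr

variable {P}

theorem affInd_iff_affineIndependent (X : Fin N → Fin d → L0 P) :
    AffInd P X ↔ N ≠ 0 ∧ AffineIndependent (L0 P) X := by
  match N, X with
  | 0, _ => simp [AffInd]
  | 1, X => simp [AffInd, affineIndependent_of_subsingleton]
  | m + 2, X =>
    rw [and_iff_right (by omega),
      affineIndependent_iff_linearIndependent_vsub _ _ (Fin.last (m + 1)),
      ← linearIndependent_equiv (finSuccAboveEquiv (Fin.last (m + 1))),
      Fintype.linearIndependent_iff]
    simp only [Function.comp_def, vsub_eq_sub, finSuccAboveEquiv_apply, Fin.succAbove_last]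
    rfl

theorem bary_eq_baryVertex (X : Fin N → Fin d → L0 P) (π : Equiv.Perm (Fin N)) :
    bary P X π = baryVertex X π := by
  ext1 k
  rw [bary, baryVertex, filter_ge_eq_Iic]

theorem mem_conv_subtype_iff {ι : Type*} [Fintype ι] (X : ι → Fin d → L0 P) (s : Finset ι)
    (Z : Fin d → L0 P) :
    Z ∈ conv P (fun i : s => X i) ↔ ∃ lam : ι → L0 P, (∀ i, 0 ≤ lam i) ∧ (∀ i ∉ s, lam i = 0) ∧
      ∑ i, lam i = 1 ∧ Z = ∑ i, lam i • X i := by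
  classical
  have hsum : ∀ {M : Type _} [AddCommMonoid M] (f : ι → M), (∀ i ∉ s, f i = 0) →
      ∑ i, f i = ∑ i : s, f i := fun f hf =>
    (Fintype.sum_subset fun i hi => not_not.mp (mt (hf i) hi)).symm.trans (sum_coe_sort s f).symm
  constructor
  · rintro ⟨lam, hpos, hone, rfl⟩
    let lam' : ι → L0 P := fun i => if h : i ∈ s then lam ⟨i, h⟩ else 0
    have hlam' : ∀ i ∉ s, lam' i = 0 := fun i hi => dif_neg hi
    refine ⟨lam', fun i => ?_, hlam', ?_, ?_⟩
    · by_cases hi : i ∈ s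
      · simpa [lam', hi] using hpos ⟨i, hi⟩
      · rw [hlam' i hi]
    · rw [hsum lam' hlam']
      simpa [lam'] using hone
    · rw [hsum _ fun i hi => by rw [hlam' i hi, zero_smul]]
      simp [lam']
  · rintro ⟨lam, hpos, hs, hone, rfl⟩
    refine ⟨fun i => lam i, fun i => hpos i, ?_, ?_⟩
    · rw [← hsum lam hs, hone]
    · exact hsum _ fun i hi => by rw [hs i hi, zero_smul]

theorem conv_bary_inter_conv_bary {X : Fin N → Fin d → L0 P} (hX : AffineIndependent (L0 P) X)
    {π σ : Equiv.Perm (Fin N)} {J : Finset (Fin N)}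
    (hJ : ∀ j, j ∈ J ↔ (Iic j).image π = (Iic j).image σ) :
    conv P (bary P X π) ∩ conv P (bary P X σ) = conv P (fun j : J => bary P X π j) := by
  ext Z
  rw [mem_conv_subtype_iff]
  constructor
  · rintro ⟨⟨v, hv, hv₁, rfl⟩, ⟨w, hw, hw₁, hvw⟩⟩
    rw [bary_eq_baryVertex, bary_eq_baryVertex] at hvw
    have hcoeff := baryCoeff_symm_eq_of_sum_smul_baryVertex_eq hX hv₁ hw₁ hvw
    exact ⟨v, hv, fun j hj => eq_zero_of_baryCoeff_symm_eq hv hw hcoeff (mt (hJ j).mpr hj), hv₁,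
      rfl⟩
  · rintro ⟨v, hv, hvJ, hv₁, rfl⟩
    refine ⟨⟨v, hv, hv₁, rfl⟩, v, hv, hv₁, sum_congr rfl fun k _ => ?_⟩
    by_cases hk : k ∈ J
    · rw [bary_eq_baryVertex, bary_eq_baryVertex, baryVertex_eq_of_image_Iic_eq X ((hJ k).mp hk)]
    · rw [hvJ k hk, zero_smul, zero_smul]

end L0

open MeasureTheory in
theorem stmt_9_general {Ω : Type*} [MeasurableSpace Ω] (P : Measure Ω)
    {d N : ℕ} (X : Fin N → Fin d → L0 P) (hX : L0.AffInd P X)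
    (pi pib : Equiv.Perm (Fin N)) (J : Finset (Fin N))
    (hJ : J = Finset.univ.filter fun j => (Finset.Iic j).image pi = (Finset.Iic j).image pib) :
    L0.conv P (L0.bary P X pi) ∩ L0.conv P (L0.bary P X pib)
        = L0.conv P (fun j : J => L0.bary P X pi j)
      ∧ L0.AffInd P (fun i : Fin J.card => L0.bary P X pi (J.orderIsoOfFin rfl i))
      ∧ (pi ≠ pib → J.card < N) := by
  have hmem : ∀ j, j ∈ J ↔ (Finset.Iic j).image pi = (Finset.Iic j).image pib := by simp [hJ]
  obtain ⟨hN, hXind⟩ := (L0.affInd_iff_affineIndependent X).mp hX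
  refine ⟨L0.conv_bary_inter_conv_bary hXind hmem, ?_, fun hne => ?_⟩
  · have hJ_nonempty : J.Nonempty := by
      obtain ⟨n, rfl⟩ := Nat.exists_eq_succ_of_ne_zero hN
      refine ⟨⊤, (hmem ⊤).mpr ?_⟩
      rw [Finset.Iic_top, Finset.image_univ_equiv, Finset.image_univ_equiv]
    rw [L0.affInd_iff_affineIndependent, L0.bary_eq_baryVertex]
    exact ⟨hJ_nonempty.card_ne_zero,
      (hXind.baryVertex pi).comp_embedding (J.orderEmbOfFin rfl).toEmbedding⟩
  · have hJ_ne : J ≠ Finset.univ := fun h =>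
      hne (Equiv.Perm.eq_of_image_Iic_eq fun j => (hmem j).mp (h ▸ Finset.mem_univ j))
    simpa using (Finset.card_lt_iff_ne_univ J).mpr hJ_ne

open MeasureTheory in
/-- intersection of two members of the barycentric subdivision. -/
theorem stmt_9 {Ω : Type*} [MeasurableSpace Ω] (P : Measure Ω) [IsProbabilityMeasure P]
    {d N : ℕ} (X : Fin N → Fin d → L0 P) (hX : L0.AffInd P X)
    (pi pib : Equiv.Perm (Fin N)) (J : Finset (Fin N))
    (hJ : J = Finset.univ.filter fun j => (Finset.Iic j).image pi = (Finset.Iic j).image pib) :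
    L0.conv P (L0.bary P X pi) ∩ L0.conv P (L0.bary P X pib)
        = L0.conv P (fun j : J => L0.bary P X pi j)
      ∧ L0.AffInd P (fun i : Fin J.card => L0.bary P X pi (J.orderIsoOfFin rfl i))
      ∧ (pi ≠ pib → J.card < N) :=
  stmt_9_general P X hX pi pib J hJ
end
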